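/- arXiv:1503.02038 — 6 statements merged into one kernel-verified Lean document; each statement's English description precedes it below -/
import Mathlib

section
/- For any ideal I ⊆ R = ℂ[x_1,…,x_N] and any polynomial f ∈ R: f lies in the contraction IR_0 ∩ R if and only if q(f) = 0 for every functional q in the Macaulay dual space D_0[I]. -/
/-!
By the usual description of contractions from a localization, `f ∈ I·R_0 ∩ R` iff `s * f ∈ I`
for some `s` with `s(0) ≠ 0`. Such an `s` is invertible modulo every power of `m`, so then
`f ∈ I + m^k` for all `k`; conversely, if `f ∈ ⋂ₖ (I + m^k)`, Krull's intersection theorem for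
`R ⧸ I` gives `r ∈ m` with `(1 - r) * f ∈ I`. Finally `⋂ₖ (I + m^k)` is exactly the annihilator
of `D_0[I]`: a functional of order `< k` kills `m^k`, and every linear functional on `R` vanishing
on `m^k` is the truncation below degree `k` of its own generating series, hence lies in `D_0`.
-/

open MvPolynomial

noncomputable section

/-- The polynomial ring `R = ℂ[x_1,…,x_N]`, with variables indexed by `Fin N`. -/
abbrev PolyR (N : ℕ) := MvPolynomial (Fin N) ℂ

/-- A dual functional `q = Σ_α c_α ∂^α` is encoded by its coefficient vector, i.e.
by an element of `MvPolynomial (Fin N) ℂ` (which is exactly the space of finitely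
supported functions `ℕ^N →₀ ℂ`).  Its application to a polynomial `f` is
`q(f) = Σ_α c_α · (coefficient of x^α in f)`. -/
def dapply {N : ℕ} (q f : PolyR N) : ℂ := ∑ α ∈ f.support, q.coeff α * f.coeff α

/-- The Macaulay dual space `D_0[I]` of an ideal `I`, as a `ℂ`-subspace of `D_0`. -/
def dualSpace {N : ℕ} (I : Ideal (PolyR N)) : Submodule ℂ (PolyR N) where
  carrier := {q | ∀ f ∈ I, dapply q f = 0}
  zero_mem' := by intro f _; simp [dapply]
  add_mem' := by
    intro a b ha hb f hf
    have h : dapply (a + b) f = dapply a f + dapply b f := by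
      simp [dapply, MvPolynomial.coeff_add, add_mul, Finset.sum_add_distrib]
    rw [h, ha f hf, hb f hf, add_zero]
  smul_mem' := by
    intro c q hq f hf
    have h : dapply (c • q) f = c * dapply q f := by
      simp [dapply, MvPolynomial.coeff_smul, Finset.mul_sum, mul_assoc]
    rw [h, hq f hf, mul_zero]

/-- The subspace of dual functionals all of whose exponents satisfy `P`. -/
def expSupported {N : ℕ} (P : (Fin N →₀ ℕ) → Prop) : Submodule ℂ (PolyR N) where
  carrier := {q | ∀ α ∈ q.support, P α}
  zero_mem' := by simp
  add_mem' := by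
    intro a b ha hb α hα
    rcases Finset.mem_union.mp (MvPolynomial.support_add hα) with h | h
    · exact ha α h
    · exact hb α h
  smul_mem' := by
    intro c q hq α hα
    exact hq α (MvPolynomial.support_smul hα)

/-- The truncated dual space `D_0^k[I]`: functionals in `D_0[I]` of order at most `k`
(in particular `0` belongs to it). -/
def truncDual {N : ℕ} (I : Ideal (PolyR N)) (k : ℕ) : Submodule ℂ (PolyR N) :=
  dualSpace I ⊓ expSupported (fun α => ∑ i, α i ≤ k)

/-- The eliminating truncated dual space `E_0^d[I, A]`, where the set of variables `A`
is given by a finite set of indices: functionals in `D_0[I]` with `ord_A ≤ d`. -/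
def elimDual {N : ℕ} (I : Ideal (PolyR N)) (A : Finset (Fin N)) (d : ℕ) :
    Submodule ℂ (PolyR N) :=
  dualSpace I ⊓ expSupported (fun α => ∑ i ∈ A, α i ≤ d)

open scoped Classical in
/-- The action `g · q` of the polynomial ring on dual functionals, determined by
`(g·q)(f) = q(g·f)`; concretely `g · ∂^α = Σ_{γ ≤ α} g_γ ∂^{α-γ}`. -/
def dmul {N : ℕ} (g q : PolyR N) : PolyR N :=
  ∑ γ ∈ g.support, ∑ α ∈ q.support,
    if γ ≤ α then (MvPolynomial.monomial (α - γ)) (g.coeff γ * q.coeff α) else 0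

/-- The maximal ideal `m = ⟨x_1,…,x_N⟩` of the origin. -/
def mIdeal (N : ℕ) : Ideal (PolyR N) := Ideal.span (Set.range MvPolynomial.X)

/-- The multiplicative set of polynomials not vanishing at the origin. -/
def atOrigin (N : ℕ) : Submonoid (PolyR N) where
  carrier := {g | MvPolynomial.constantCoeff g ≠ 0}
  one_mem' := by simp
  mul_mem' := by
    intro a b ha hb
    simp only [Set.mem_setOf_eq, map_mul]
    exact mul_ne_zero ha hb

/-- The local ring `R_0` of the origin: the localization of `R` at the maximal ideal
of the origin. -/
abbrev LocR (N : ℕ) := Localization (atOrigin N)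

/-- The extension `I·R_0` of an ideal `I ⊆ R` to the local ring of the origin. -/
def extIdeal {N : ℕ} (I : Ideal (PolyR N)) : Ideal (LocR N) :=
  Ideal.map (algebraMap (PolyR N) (LocR N)) I

/-- The contraction `I·R_0 ∩ R` of the extension of `I` back to `R`. -/
def contExt {N : ℕ} (I : Ideal (PolyR N)) : Ideal (PolyR N) :=
  Ideal.comap (algebraMap (PolyR N) (LocR N)) (extIdeal I)

/-- The local Hilbert function
`H_I(k) = dim_ℂ R/(I + m^{k+1}) − dim_ℂ R/(I + m^k)`
(note that for `k = 0` the subtrahend vanishes since `m^0 = R`). -/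
def hilb {N : ℕ} (I : Ideal (PolyR N)) (k : ℕ) : ℕ :=
  Module.finrank ℂ (PolyR N ⧸ (I + mIdeal N ^ (k + 1)))
    - Module.finrank ℂ (PolyR N ⧸ (I + mIdeal N ^ k))

section KrullSaturation

variable {R : Type*} [CommRing R]

theorem Ideal.mem_sup_pow_of_mul_mem {I m : Ideal R} [m.IsMaximal] {s f : R} (hs : s ∉ m)
    (hsf : s * f ∈ I) (k : ℕ) : f ∈ I ⊔ m ^ k := by
  obtain ⟨t, i, hi, hti⟩ := Ideal.IsMaximal.exists_inv_pow m hs k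
  have hf : f = t * (s * f) + i * f := by
    linear_combination (-f) * hti
  rw [hf]
  exact add_mem (Ideal.mem_sup_left (I.mul_mem_left t hsf))
    (Ideal.mem_sup_right ((m ^ k).mul_mem_right f hi))

/-- Krull's intersection theorem, applied to the module `R ⧸ I`. -/
theorem Ideal.exists_one_sub_mul_mem_of_forall_mem_sup_pow [IsNoetherianRing R] {I J : Ideal R}
    {f : R} (h : ∀ k : ℕ, f ∈ I ⊔ J ^ k) : ∃ r ∈ J, (1 - r) * f ∈ I := by
  have hmem : Ideal.Quotient.mk I f ∈ (⨅ k : ℕ, J ^ k • ⊤ : Submodule R (R ⧸ I)) := by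
    refine Submodule.mem_iInf _ |>.mpr fun k => ?_
    rw [Ideal.smul_top_eq_map, Submodule.restrictScalars_mem, Ideal.Quotient.algebraMap_eq,
      Ideal.mem_quotient_iff_mem_sup, sup_comm]
    exact h k
  obtain ⟨⟨r, hr⟩, hrf⟩ := (J.mem_iInf_smul_pow_eq_bot_iff _).mp hmem
  refine ⟨r, hr, Ideal.Quotient.eq_zero_iff_mem.mp ?_⟩
  rw [map_mul, map_sub, map_one, sub_mul, one_mul, sub_eq_zero, ← Ideal.Quotient.algebraMap_eq,
    ← Algebra.smul_def]
  exact hrf.symm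

end KrullSaturation

section MacaulayDuality

variable {N : ℕ}

theorem mem_mIdeal_pow_iff {k : ℕ} {f : PolyR N} :
    f ∈ mIdeal N ^ k ↔ ∀ α : Fin N →₀ ℕ, α.degree < k → f.coeff α = 0 :=
  mem_pow_idealOfVars_iff' k f

theorem mem_mIdeal_iff {f : PolyR N} : f ∈ mIdeal N ↔ constantCoeff f = 0 := by
  rw [← pow_one (mIdeal N), mem_mIdeal_pow_iff]
  simp [Finsupp.degree_eq_zero_iff, constantCoeff_eq]

instance mIdeal_isMaximal : (mIdeal N).IsMaximal := by
  have hker : mIdeal N = RingHom.ker (constantCoeff : PolyR N →+* ℂ) := by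
    ext f
    exact mem_mIdeal_iff
  rw [hker]
  exact RingHom.ker_isMaximal_of_surjective _ fun c => ⟨C c, constantCoeff_C _ c⟩

theorem mem_atOrigin_iff {s : PolyR N} : s ∈ atOrigin N ↔ s ∉ mIdeal N :=
  mem_mIdeal_iff.not.symm

theorem mem_contExt_iff {I : Ideal (PolyR N)} {f : PolyR N} :
    f ∈ contExt I ↔ ∃ s ∈ atOrigin N, s * f ∈ I :=
  IsLocalization.algebraMap_mem_map_algebraMap_iff (S := LocR N) (atOrigin N) I f

theorem exists_mem_atOrigin_mul_mem_iff {I : Ideal (PolyR N)} {f : PolyR N} :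
    (∃ s ∈ atOrigin N, s * f ∈ I) ↔ ∀ k : ℕ, f ∈ I ⊔ mIdeal N ^ k := by
  constructor
  · rintro ⟨s, hs, hsf⟩ k
    exact Ideal.mem_sup_pow_of_mul_mem (mem_atOrigin_iff.mp hs) hsf k
  · intro h
    obtain ⟨r, hr, hrf⟩ := Ideal.exists_one_sub_mul_mem_of_forall_mem_sup_pow h
    refine ⟨1 - r, ?_, hrf⟩
    show constantCoeff (1 - r) ≠ 0
    simp [mem_mIdeal_iff.mp hr]

theorem dapply_eq_sum_support_left (q f : PolyR N) :
    dapply q f = ∑ α ∈ q.support, q.coeff α * f.coeff α := by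
  calc dapply q f = ∑ α ∈ f.support ∪ q.support, q.coeff α * f.coeff α :=
        Finset.sum_subset Finset.subset_union_left fun α _ hα => by
          simp [notMem_support_iff.mp hα]
    _ = ∑ α ∈ q.support, q.coeff α * f.coeff α :=
        (Finset.sum_subset Finset.subset_union_right fun α _ hα => by
          simp [notMem_support_iff.mp hα]).symm

theorem dapply_add_right (q f g : PolyR N) : dapply q (f + g) = dapply q f + dapply q g := by
  simp only [dapply_eq_sum_support_left, coeff_add, mul_add, Finset.sum_add_distrib]

theorem dapply_eq_zero_of_mem_mIdeal_pow {q g : PolyR N} {k : ℕ}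
    (hq : ∀ α ∈ q.support, α.degree < k) (hg : g ∈ mIdeal N ^ k) : dapply q g = 0 := by
  rw [dapply_eq_sum_support_left]
  exact Finset.sum_eq_zero fun α hα => by rw [mem_mIdeal_pow_iff.mp hg α (hq α hα), mul_zero]

theorem exists_dapply_eq_of_forall_mem_mIdeal_pow (ψ : PolyR N →ₗ[ℂ] ℂ) {k : ℕ}
    (hψ : ∀ g ∈ mIdeal N ^ k, ψ g = 0) : ∃ q : PolyR N, ∀ g, dapply q g = ψ g := by
  obtain ⟨p, hp⟩ : ∃ p : MvPowerSeries (Fin N) ℂ,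
      ∀ α, MvPowerSeries.coeff α p = ψ (monomial α 1) :=
    ⟨fun α => ψ (monomial α 1), fun _ => rfl⟩
  refine ⟨MvPowerSeries.truncTotal k p, fun g => ?_⟩
  conv_rhs => rw [g.as_sum]
  rw [map_sum, dapply]
  refine Finset.sum_congr rfl fun α _ => ?_
  have hmon : monomial α (g.coeff α) = g.coeff α • monomial α (1 : ℂ) := by
    rw [smul_monomial, smul_eq_mul, mul_one]
  rw [MvPowerSeries.coeff_truncTotal_eq_ite, hmon, map_smul, smul_eq_mul, mul_comm]
  split_ifs with hα
  · rw [hp]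
  · rw [hψ _ (mem_mIdeal_pow_iff.mpr fun β hβ => ?_), mul_zero]
    rw [coeff_monomial, if_neg]
    rintro rfl
    exact hα hβ

theorem exists_mem_dualSpace_dapply_ne_zero {I : Ideal (PolyR N)} {k : ℕ} {f : PolyR N}
    (hf : f ∉ I ⊔ mIdeal N ^ k) : ∃ q ∈ dualSpace I, dapply q f ≠ 0 := by
  obtain ⟨ψ, hψf, hψ⟩ := Submodule.exists_dual_map_eq_bot_of_notMem
    (p := (I ⊔ mIdeal N ^ k).restrictScalars ℂ) hf inferInstance
  have hψ0 : ∀ g ∈ I ⊔ mIdeal N ^ k, ψ g = 0 := fun g hg =>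
    (Submodule.eq_bot_iff _).mp hψ (ψ g) (Submodule.mem_map_of_mem hg)
  obtain ⟨q, hq⟩ := exists_dapply_eq_of_forall_mem_mIdeal_pow ψ fun g hg =>
    hψ0 g (Ideal.mem_sup_right hg)
  exact ⟨q, fun g hg => (hq g).trans (hψ0 g (Ideal.mem_sup_left hg)), (hq f).trans_ne hψf⟩

theorem forall_dapply_eq_zero_iff {I : Ideal (PolyR N)} {f : PolyR N} :
    (∀ q ∈ dualSpace I, dapply q f = 0) ↔ ∀ k : ℕ, f ∈ I ⊔ mIdeal N ^ k := by
  refine ⟨fun h k => by_contra fun hf => ?_, fun h q hq => ?_⟩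
  · obtain ⟨q, hq, hqf⟩ := exists_mem_dualSpace_dapply_ne_zero hf
    exact hqf (h q hq)
  · obtain ⟨a, ha, b, hb, rfl⟩ := Submodule.mem_sup.mp (h (q.support.sup Finsupp.degree + 1))
    rw [dapply_add_right, hq a ha, zero_add]
    exact dapply_eq_zero_of_mem_mIdeal_pow (fun α hα => Nat.lt_succ_of_le (Finset.le_sup hα)) hb

end MacaulayDuality

theorem statement1_general {N : ℕ} (I : Ideal (PolyR N)) (f : PolyR N) :
    f ∈ contExt I ↔ ∀ q ∈ dualSpace I, dapply q f = 0 := by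
  rw [mem_contExt_iff, exists_mem_atOrigin_mul_mem_iff, forall_dapply_eq_zero_iff]

/-- For any ideal `I ⊆ R` and any `f ∈ R`:
`f ∈ I·R_0 ∩ R` iff `q(f) = 0` for every `q ∈ D_0[I]`. -/
theorem statement1 {N : ℕ} (hN : 1 ≤ N) (I : Ideal (PolyR N)) (f : PolyR N) :
    f ∈ contExt I ↔ ∀ q ∈ dualSpace I, dapply q f = 0 :=
  statement1_general I f
end
end

section
/- Let I ⊆ R = ℂ[x_1,…,x_N] be an ideal generated by homogeneous polynomials and let f ∈ R be a polynomial of degree at most d. Then f ∈ I if and only if q(f) = 0 for every q in the truncated dual space D_0^d[I]. -/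
open MvPolynomial

noncomputable section

/-!
Truncating a polynomial to total degree `≤ d` keeps it in a homogeneous ideal `I`, since it is a
sum of homogeneous components. If `f ∉ I`, choose a linear functional `φ` on `R` vanishing on `I`
with `φ f ≠ 0`; the functional `g ↦ φ (truncation of g)` is then represented by a dual element of
order `≤ d` (its coefficients are `φ (x^α)` for `|α| ≤ d`), which lies in `D_0^d[I]` and does not
vanish at `f`.
-/

attribute [local instance] MvPolynomial.gradedAlgebra

namespace MvPolynomial

variable {σ R : Type*} [CommSemiring R]

def truncTotalDegree (d : ℕ) (p : MvPolynomial σ R) : MvPolynomial σ R :=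
  ∑ k ∈ Finset.range (d + 1), homogeneousComponent k p

theorem coeff_truncTotalDegree (d : ℕ) (p : MvPolynomial σ R) (α : σ →₀ ℕ) :
    coeff α (truncTotalDegree d p) = if α.degree ≤ d then coeff α p else 0 := by
  simp only [truncTotalDegree, coeff_sum, coeff_homogeneousComponent, Finset.sum_ite_eq,
    Finset.mem_range, Nat.lt_succ_iff]

theorem support_truncTotalDegree_subset (d : ℕ) (p : MvPolynomial σ R) :
    (truncTotalDegree d p).support ⊆ p.support := by
  intro α hα
  rw [mem_support_iff, coeff_truncTotalDegree] at hα
  rw [mem_support_iff]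
  split_ifs at hα
  exacts [hα, absurd rfl hα]

theorem truncTotalDegree_eq_self {d : ℕ} {p : MvPolynomial σ R} (h : p.totalDegree ≤ d) :
    truncTotalDegree d p = p := by
  ext α
  rw [coeff_truncTotalDegree, ite_eq_left_iff]
  intro hα
  exact (coeff_eq_zero_of_totalDegree_lt (h.trans_lt (not_le.mp hα))).symm

theorem truncTotalDegree_mem {I : Ideal (MvPolynomial σ R)}
    (hI : I.IsHomogeneous (homogeneousSubmodule σ R)) (d : ℕ) {p : MvPolynomial σ R}
    (hp : p ∈ I) : truncTotalDegree d p ∈ I :=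
  Ideal.sum_mem _ fun k _ => homogeneousComponent_mem_of_mem hI hp k

theorem isHomogeneous_span {G : Set (MvPolynomial σ R)} (hG : ∀ g ∈ G, ∃ k, g.IsHomogeneous k) :
    (Ideal.span G).IsHomogeneous (homogeneousSubmodule σ R) :=
  Ideal.homogeneous_span _ _ fun g hg =>
    (hG g hg).imp fun _ hk => (mem_homogeneousSubmodule _ _).2 hk

end MvPolynomial

section DualOfFunctional

variable {N : ℕ}

def dualOfFunctional (φ : PolyR N →ₗ[ℂ] ℂ) (d : ℕ) : PolyR N :=
  ∑ α ∈ (Finsupp.finite_of_degree_le d).toFinset, monomial α (φ (monomial α 1))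

theorem coeff_dualOfFunctional (φ : PolyR N →ₗ[ℂ] ℂ) (d : ℕ) (α : Fin N →₀ ℕ) :
    coeff α (dualOfFunctional φ d) = if α.degree ≤ d then φ (monomial α 1) else 0 := by
  classical
  simp only [dualOfFunctional, coeff_sum, coeff_monomial, Finset.sum_ite_eq',
    Set.Finite.mem_toFinset, Set.mem_ofPred_eq]

theorem dualOfFunctional_mem_expSupported (φ : PolyR N →ₗ[ℂ] ℂ) (d : ℕ) :
    dualOfFunctional φ d ∈ expSupported (fun α => ∑ i, α i ≤ d) := by
  intro α hα
  rw [mem_support_iff, coeff_dualOfFunctional] at hα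
  rw [← Finsupp.degree_eq_sum]
  by_contra h
  exact hα (if_neg h)

theorem dapply_dualOfFunctional (φ : PolyR N →ₗ[ℂ] ℂ) (d : ℕ) (g : PolyR N) :
    dapply (dualOfFunctional φ d) g = φ (truncTotalDegree d g) := by
  have hT : truncTotalDegree d g = ∑ α ∈ g.support, monomial α (coeff α (truncTotalDegree d g)) :=
    (support_sum_monomial_coeff _).symm.trans <|
      Finset.sum_subset (support_truncTotalDegree_subset d g) fun α _ hα => by
        rw [notMem_support_iff.mp hα, monomial_zero]
  have hφ (α : Fin N →₀ ℕ) (c : ℂ) : φ (monomial α c) = c * φ (monomial α 1) := by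
    rw [← smul_eq_mul, ← map_smul, smul_monomial, smul_eq_mul, mul_one]
  rw [hT, map_sum, dapply]
  refine Finset.sum_congr rfl fun α _ => ?_
  rw [hφ, coeff_dualOfFunctional, coeff_truncTotalDegree]
  split_ifs <;> ring

theorem dualOfFunctional_mem_truncDual {I : Ideal (PolyR N)}
    (hI : I.IsHomogeneous (homogeneousSubmodule (Fin N) ℂ)) {φ : PolyR N →ₗ[ℂ] ℂ}
    (hφ : I.restrictScalars ℂ ≤ LinearMap.ker φ) (d : ℕ) :
    dualOfFunctional φ d ∈ truncDual I d :=
  ⟨fun g hg => by rw [dapply_dualOfFunctional]; exact hφ (truncTotalDegree_mem hI d hg),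
    dualOfFunctional_mem_expSupported φ d⟩

end DualOfFunctional

theorem statement4_general {N : ℕ} (I : Ideal (PolyR N))
    (hI : ∃ G : Set (PolyR N), (∀ g ∈ G, ∃ k, MvPolynomial.IsHomogeneous g k) ∧
      Ideal.span G = I)
    (d : ℕ) (f : PolyR N) (hf : f.totalDegree ≤ d) :
    f ∈ I ↔ ∀ q ∈ truncDual I d, dapply q f = 0 := by
  refine ⟨fun hfI q hq => hq.1 f hfI, fun hdual => ?_⟩
  obtain ⟨G, hG, rfl⟩ := hI
  by_contra hfI
  obtain ⟨φ, hφf, hφ⟩ :=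
    Submodule.exists_le_ker_of_notMem (p := (Ideal.span G).restrictScalars ℂ) hfI
  apply hφf
  rw [← truncTotalDegree_eq_self hf, ← dapply_dualOfFunctional]
  exact hdual _ (dualOfFunctional_mem_truncDual (isHomogeneous_span hG) hφ d)

/-- If `I` is generated by homogeneous polynomials and
`deg f ≤ d`, then `f ∈ I` iff `q(f) = 0` for every `q ∈ D_0^d[I]`. -/
theorem statement4 {N : ℕ} (hN : 1 ≤ N) (I : Ideal (PolyR N))
    (hI : ∃ G : Set (PolyR N), (∀ g ∈ G, ∃ k, MvPolynomial.IsHomogeneous g k) ∧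
      Ideal.span G = I)
    (d : ℕ) (f : PolyR N) (hf : f.totalDegree ≤ d) :
    f ∈ I ↔ ∀ q ∈ truncDual I d, dapply q f = 0 :=
  statement4_general I hI d f hf
end
end

section
/- Let ⪯ be a monomial order on ℕ^N and let I ⊆ R = ℂ[x_1,…,x_N] be an ideal whose dual space D_0[I] is finite-dimensional over ℂ. Then the set of dual initial exponents of the dual space equals the complement of the set of local initial exponents of I: in(D_0[I]) = ℕ^N \ in(I). -/
open MvPolynomial

noncomputable section

/-- Given a monomial order `le` on `ℕ^N`, the set of local initial exponents of an
ideal `I`: `in(f)` is the `le`-smallest exponent in the support of a nonzero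
`f ∈ I` (the initial term for the local order opposite to `le`). -/
def localIn {N : ℕ} (le : (Fin N →₀ ℕ) → (Fin N →₀ ℕ) → Prop)
    (I : Ideal (PolyR N)) : Set (Fin N →₀ ℕ) :=
  {α | ∃ f ∈ I, f ≠ 0 ∧ α ∈ f.support ∧ ∀ β ∈ f.support, le α β}

/-- Given a monomial order `le` on `ℕ^N`, the set of dual initial exponents of a
subspace `L ⊆ D_0`: `in(q)` is the `le`-largest exponent in the support of a
nonzero `q ∈ L`. -/
def dualIn {N : ℕ} (le : (Fin N →₀ ℕ) → (Fin N →₀ ℕ) → Prop)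
    (L : Submodule ℂ (PolyR N)) : Set (Fin N →₀ ℕ) :=
  {α | ∃ q ∈ L, q ≠ 0 ∧ α ∈ q.support ∧ ∀ β ∈ q.support, le β α}

/-!
If `α` were both the dual initial exponent of `q ∈ D_0[I]` and the local initial exponent of
`f ∈ I`, then `q(f) = q_α f_α ≠ 0`.

Conversely, finiteness of `D_0[I]` makes the chain `D_0[I + m^k]` stabilise, and duality for
ideals containing a power of `m` turns this into `I + m^K = I + m^(K+1)`. Nakayama's lemma then
gives `u` with `u(0) = 1` and `u (I + m^K) ⊆ I`; multiplication by `u` preserves local initial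
exponents, so `α ∉ in(I)` forces `α ∉ in(I + m^K)`. Hence `x^α` does not lie in the span of
`I + m^K` and the monomials `x^β` with `β ⋠ α`, a subspace of finite codimension, and a
functional separating `x^α` from it lies in `D_0[I]` and has dual initial exponent `α`.
-/

section

variable {N : ℕ}

lemma dapply_eq_of_coeff_eq (φ : PolyR N →ₗ[ℂ] ℂ) {q : PolyR N}
    (hq : ∀ β, q.coeff β = φ (monomial β 1)) (f : PolyR N) : dapply q f = φ f := by
  conv_rhs => rw [f.as_sum]
  simp only [dapply, hq, map_sum]
  refine Finset.sum_congr rfl fun β _ => ?_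
  rw [show monomial β (f.coeff β) = f.coeff β • monomial β (1 : ℂ) by
    rw [smul_monomial, smul_eq_mul, mul_one], map_smul, smul_eq_mul, mul_comm]

lemma exists_dapply_eq (φ : PolyR N →ₗ[ℂ] ℂ) (hφ : {β | φ (monomial β 1) ≠ 0}.Finite) :
    ∃ q : PolyR N, ∀ f, dapply q f = φ f :=
  ⟨AddMonoidAlgebra.ofCoeff (Finsupp.ofSupportFinite _ hφ), dapply_eq_of_coeff_eq φ fun _ => rfl⟩

lemma dapply_monomial_one (q : PolyR N) (β : Fin N →₀ ℕ) :
    dapply q (monomial β 1) = q.coeff β := by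
  simp [dapply, support_monomial]

lemma exists_dapply_separating (W : Submodule ℂ (PolyR N))
    (hW : {β | monomial β (1 : ℂ) ∉ W}.Finite) {v : PolyR N} (hv : v ∉ W) :
    ∃ q : PolyR N, (∀ f ∈ W, dapply q f = 0) ∧ dapply q v ≠ 0 := by
  obtain ⟨φ, hφv, hφW⟩ := W.exists_dual_map_eq_bot_of_notMem hv inferInstance
  have hφW' : ∀ f ∈ W, φ f = 0 := fun f hf =>
    LinearMap.le_ker_iff_map.2 hφW hf
  obtain ⟨q, hq⟩ := exists_dapply_eq φ (hW.subset fun β hβ hmem => hβ (hφW' _ hmem))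
  exact ⟨q, fun f hf => (hq f).trans (hφW' f hf), (hq v).trans_ne hφv⟩

lemma finite_setOf_monomial_notMem_of_pow_le (W : Submodule ℂ (PolyR N)) {K : ℕ}
    (hW : ∀ g ∈ mIdeal N ^ K, g ∈ W) : {β | monomial β (1 : ℂ) ∉ W}.Finite :=
  (Finsupp.finite_of_degree_le K).subset fun β hβ => by
    by_contra hdeg
    exact hβ (hW _ ((monomial_mem_pow_idealOfVars_iff _ _ one_ne_zero).2 (not_le.1 hdeg).le))

lemma dualSpace_antitone : Antitone (dualSpace (N := N)) :=
  fun _ _ h _ hq f hf => hq f (h hf)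

lemma le_of_dualSpace_le {J J' : Ideal (PolyR N)} {K : ℕ} (hK : mIdeal N ^ K ≤ J)
    (h : dualSpace J ≤ dualSpace J') : J' ≤ J := by
  intro g hg
  by_contra hgJ
  obtain ⟨q, hqJ, hqg⟩ := exists_dapply_separating (J.restrictScalars ℂ)
    (finite_setOf_monomial_notMem_of_pow_le _ fun f hf => hK hf) hgJ
  exact hqg (h hqJ g hg)

lemma exists_dualSpace_sup_pow_succ_le (I : Ideal (PolyR N))
    [FiniteDimensional ℂ (dualSpace I)] :
    ∃ K, dualSpace (I ⊔ mIdeal N ^ (K + 1)) ≤ dualSpace (I ⊔ mIdeal N ^ K) := by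
  let D : ℕ →o Submodule ℂ (dualSpace I) :=
    ⟨fun j => (dualSpace (I ⊔ mIdeal N ^ j)).comap (dualSpace I).subtype, fun i j hij =>
      Submodule.comap_mono (dualSpace_antitone (sup_le_sup_left (Ideal.pow_le_pow_right hij) I))⟩
  obtain ⟨K, hK⟩ := monotone_stabilizes_iff_noetherian.2 inferInstance D
  refine ⟨K, fun q hq => ?_⟩
  have hqI : q ∈ dualSpace I := dualSpace_antitone le_sup_left hq
  have : (⟨q, hqI⟩ : dualSpace I) ∈ D (K + 1) := hq
  rw [← hK (K + 1) K.le_succ] at this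
  exact this

lemma exists_constantCoeff_eq_one_mul_mem {I : Ideal (PolyR N)} {K : ℕ}
    (h : I ⊔ mIdeal N ^ K ≤ I ⊔ mIdeal N ^ (K + 1)) :
    ∃ u : PolyR N, constantCoeff u = 1 ∧ ∀ g ∈ I ⊔ mIdeal N ^ K, u * g ∈ I := by
  have hsup : I ⊔ mIdeal N ^ K ≤ I ⊔ mIdeal N • mIdeal N ^ K := by
    rwa [Ideal.smul_eq_mul, ← pow_succ']
  obtain ⟨u, hu1, hu⟩ := Submodule.exists_sub_one_mem_and_smul_le_of_fg_of_le_sup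
    (IsNoetherian.noetherian _) le_sup_right hsup
  refine ⟨u, ?_, fun g hg => hu (Submodule.smul_mem_pointwise_smul g u _ hg)⟩
  have := (mem_pow_idealOfVars_iff' 1 (u - 1)).1 (by rwa [pow_one]) 0 (by simp)
  simpa [sub_eq_zero, constantCoeff_eq] using this

section MonomialOrder

variable {le : (Fin N →₀ ℕ) → (Fin N →₀ ℕ) → Prop}

lemma dualIn_mono {L L' : Submodule ℂ (PolyR N)} (h : L ≤ L') : dualIn le L ⊆ dualIn le L' :=
  fun _ ⟨q, hq, hrest⟩ => ⟨q, h hq, hrest⟩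

lemma disjoint_dualIn_dualSpace_localIn [Std.Antisymm le] (I : Ideal (PolyR N)) :
    Disjoint (dualIn le (dualSpace I)) (localIn le I) := by
  refine Set.disjoint_left.2 ?_
  rintro α ⟨q, hq, -, hαq, hqmax⟩ ⟨f, hf, -, hαf, hfmin⟩
  have : dapply q f = q.coeff α * f.coeff α :=
    Finset.sum_eq_single_of_mem α hαf fun β hβ hne => by
      rw [notMem_support_iff.1 fun hβq => hne (antisymm (hqmax β hβq) (hfmin β hβ)), zero_mul]
  exact mul_ne_zero (mem_support_iff.1 hαq) (mem_support_iff.1 hαf) (this ▸ hq f hf)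

lemma monomial_notMem_sup_expSupported [Std.Total le] {J : Ideal (PolyR N)}
    {α : Fin N →₀ ℕ} (hα : α ∉ localIn le J) :
    monomial α (1 : ℂ) ∉ J.restrictScalars ℂ ⊔ expSupported (fun β => ¬ le β α) := by
  intro hmem
  obtain ⟨g, hg, w, hw, hgw⟩ := Submodule.mem_sup.1 hmem
  have hαw : w.coeff α = 0 := notMem_support_iff.1 fun h => hw α h (refl_of le α)
  have hcoeff : ∀ β, g.coeff β = (monomial α (1 : ℂ)).coeff β - w.coeff β := fun β => by
    rw [← hgw]; simp
  have hgα : g.coeff α = 1 := by simp [hcoeff, hαw]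
  refine hα ⟨g, hg, ?_, mem_support_iff.2 (by simp [hgα]), fun β hβ => ?_⟩
  · rintro rfl
    simp at hgα
  · by_cases hβα : β = α
    · exact hβα ▸ refl_of le α
    have : w.coeff β ≠ 0 := by
      simpa [hcoeff, coeff_monomial, Ne.symm hβα] using mem_support_iff.1 hβ
    exact (total_of le α β).resolve_right (hw β (mem_support_iff.2 this))

lemma mem_dualIn_dualSpace_of_notMem_localIn [Std.Total le] {J : Ideal (PolyR N)} {K : ℕ}
    (hK : mIdeal N ^ K ≤ J) {α : Fin N →₀ ℕ} (hα : α ∉ localIn le J) :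
    α ∈ dualIn le (dualSpace J) := by
  set W := J.restrictScalars ℂ ⊔ expSupported (fun β => ¬ le β α)
  obtain ⟨q, hqW, hqα⟩ := exists_dapply_separating W
    (finite_setOf_monomial_notMem_of_pow_le W fun g hg => Submodule.mem_sup_left (hK hg))
    (monomial_notMem_sup_expSupported hα)
  rw [dapply_monomial_one] at hqα
  refine ⟨q, fun f hf => hqW f (Submodule.mem_sup_left hf), ?_, mem_support_iff.2 hqα,
    fun β hβ => ?_⟩
  · rintro rfl
    exact hqα (coeff_zero α)
  · by_contra hβα
    have hmon : monomial β (1 : ℂ) ∈ W := Submodule.mem_sup_right fun γ hγ => by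
      rwa [Finset.mem_singleton.1 (support_monomial_subset hγ)]
    exact mem_support_iff.1 hβ (by simpa [dapply_monomial_one] using hqW _ hmon)

lemma coeff_mul_of_forall_le [Std.Antisymm le] (hle : ∀ a b, le b (a + b))
    {u f : PolyR N} {α : Fin N →₀ ℕ} (hmin : ∀ β ∈ f.support, le α β) :
    (u * f).coeff α = constantCoeff u * f.coeff α := by
  classical
  rw [coeff_mul, Finset.sum_eq_single_of_mem (0, α) (by simp)]
  · simp [constantCoeff_eq]
  rintro ⟨a, b⟩ hab hne
  rw [Finset.HasAntidiagonal.mem_antidiagonal] at hab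
  dsimp only at hab ⊢
  by_cases hb : b ∈ f.support
  · have hbα : b = α := antisymm (hab ▸ hle a b) (hmin b hb)
    subst hbα
    exact absurd (by simp [add_eq_right.1 hab]) hne
  · rw [notMem_support_iff.1 hb, mul_zero]

lemma localIn_subset_of_mul_mem [Std.Antisymm le] [IsTrans _ le] (hle : ∀ a b, le b (a + b))
    {I J : Ideal (PolyR N)} {u : PolyR N} (hu : constantCoeff u ≠ 0)
    (h : ∀ g ∈ J, u * g ∈ I) : localIn le J ⊆ localIn le I := by
  rintro α ⟨g, hgJ, -, hα, hmin⟩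
  have hcoeff : (u * g).coeff α ≠ 0 := by
    rw [coeff_mul_of_forall_le hle hmin]
    exact mul_ne_zero hu (mem_support_iff.1 hα)
  refine ⟨u * g, h g hgJ, fun h0 => by simp [h0] at hcoeff, mem_support_iff.2 hcoeff,
    fun β hβ => ?_⟩
  obtain ⟨a, -, b, hb, rfl⟩ := Finset.mem_add.1 (support_mul u g hβ)
  exact _root_.trans (hmin b hb) (hle a b)

end MonomialOrder

end

theorem statement11_general {N : ℕ}
    (le : (Fin N →₀ ℕ) → (Fin N →₀ ℕ) → Prop)
    (hlin : IsLinearOrder (Fin N →₀ ℕ) le)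
    (hzero : ∀ α, le 0 α)
    (hadd : ∀ α β γ, le α β → le (α + γ) (β + γ))
    (I : Ideal (PolyR N))
    (hfin : FiniteDimensional ℂ (dualSpace I)) :
    dualIn le (dualSpace I) = (localIn le I)ᶜ := by
  have hle : ∀ a b, le b (a + b) := fun a b => by simpa using hadd 0 a b (hzero a)
  obtain ⟨K, hK⟩ := exists_dualSpace_sup_pow_succ_le I
  obtain ⟨u, hu, huI⟩ := exists_constantCoeff_eq_one_mul_mem (le_of_dualSpace_le le_sup_right hK)
  refine (Set.subset_compl_iff_disjoint_right.2 (disjoint_dualIn_dualSpace_localIn I)).antisymm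
    fun α hα => ?_
  have hαK : α ∉ localIn le (I ⊔ mIdeal N ^ K) := fun h =>
    hα (localIn_subset_of_mul_mem hle (hu ▸ one_ne_zero) huI h)
  exact dualIn_mono (dualSpace_antitone le_sup_left)
    (mem_dualIn_dualSpace_of_notMem_localIn le_sup_right hαK)

/-- If `le` is a monomial order on `ℕ^N` and `D_0[I]` is finite
dimensional, then `in(D_0[I]) = ℕ^N \ in(I)`. -/
theorem statement11 {N : ℕ} (hN : 1 ≤ N)
    (le : (Fin N →₀ ℕ) → (Fin N →₀ ℕ) → Prop)
    (hlin : IsLinearOrder (Fin N →₀ ℕ) le)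
    (hzero : ∀ α, le 0 α)
    (hadd : ∀ α β γ, le α β → le (α + γ) (β + γ))
    (I : Ideal (PolyR N))
    (hfin : FiniteDimensional ℂ (dualSpace I)) :
    dualIn le (dualSpace I) = (localIn le I)ᶜ :=
  statement11_general le hlin hzero hadd I hfin
end
end

section
/- Let I ⊆ R = ℂ[x_1,…,x_N] be an ideal, let 1 ≤ m ≤ N, and set A = {x_1,…,x_m}. If dim_ℂ D_0[I + ⟨x_1,…,x_m⟩] < ∞, then for every d ∈ ℕ the eliminating truncated dual space E_0^d[I, A] is finite-dimensional over ℂ. -/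
/-!
Contraction `q ↦ x_i · q`, `(x_i · q)(f) = q(x_i f)`, preserves `D_0[I]` and lowers `ord_A` by
one for `x_i ∈ A`. A functional of `D_0[I]` killed by all these contractions annihilates
`⟨x_i : x_i ∈ A⟩`, hence lies in `D_0[I + ⟨A⟩]`. So `E_0^{d+1}[I, A]` is an extension of a
subspace of `(E_0^d[I, A])^A` by a subspace of `D_0[I + ⟨A⟩]`, and induction on `d` applies.
-/

open MvPolynomial

noncomputable section

namespace MvPolynomial

def divMonomialₗ {σ R : Type*} [CommSemiring R] (s : σ →₀ ℕ) :
    MvPolynomial σ R →ₗ[R] MvPolynomial σ R where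
  toFun p := p.divMonomial s
  map_add' p q := add_divMonomial p q s
  map_smul' c p := by ext; simp

end MvPolynomial

instance Submodule.finiteDimensional_pi {K V ι : Type*} [DivisionRing K] [AddCommGroup V]
    [Module K V] [Finite ι] (p : ι → Submodule K V) [∀ i, FiniteDimensional K (p i)] :
    FiniteDimensional K (Submodule.pi Set.univ p) :=
  Submodule.finiteDimensional_of_le
    (S₂ := LinearMap.range (LinearMap.piMap fun i => (p i).subtype))
    fun x hx => ⟨fun i => ⟨x i, hx i (Set.mem_univ i)⟩, rfl⟩

lemma Submodule.finiteDimensional_of_map_of_inf_ker {K V W : Type*} [DivisionRing K]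
    [AddCommGroup V] [Module K V] [AddCommGroup W] [Module K W] (f : V →ₗ[K] W)
    {s : Submodule K V} [FiniteDimensional K (s.map f)]
    [FiniteDimensional K (s ⊓ LinearMap.ker f : Submodule K V)] : FiniteDimensional K s := by
  rw [← Submodule.fg_iff_finiteDimensional] at *
  exact Submodule.fg_of_fg_map_of_fg_inf_ker f ‹_› ‹_›

section MacaulayDual

variable {N : ℕ}

lemma dapply_eq_sum_of_support_subset (q f : PolyR N) {S : Finset (Fin N →₀ ℕ)}
    (h : f.support ⊆ S) : dapply q f = ∑ α ∈ S, q.coeff α * f.coeff α :=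
  Finset.sum_subset h fun α _ hα => by rw [notMem_support_iff.mp hα, mul_zero]

lemma dapply_add (q a b : PolyR N) : dapply q (a + b) = dapply q a + dapply q b := by
  classical
  rw [dapply_eq_sum_of_support_subset q (a + b) support_add,
    dapply_eq_sum_of_support_subset q a Finset.subset_union_left,
    dapply_eq_sum_of_support_subset q b Finset.subset_union_right, ← Finset.sum_add_distrib]
  simp only [coeff_add, mul_add]

lemma dapply_divMonomial_single (q f : PolyR N) (i : Fin N) :
    dapply (q.divMonomial (Finsupp.single i 1)) f = dapply q (f * X i) := by
  rw [dapply, dapply, support_mul_X, Finset.sum_map]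
  refine Finset.sum_congr rfl fun β _ => ?_
  rw [addRightEmbedding_apply, coeff_mul_X, coeff_divMonomial, add_comm]

lemma divMonomial_single_mem_dualSpace {I : Ideal (PolyR N)} {q : PolyR N}
    (hq : q ∈ dualSpace I) (i : Fin N) : q.divMonomial (Finsupp.single i 1) ∈ dualSpace I :=
  fun f hf => by rw [dapply_divMonomial_single]; exact hq _ (I.mul_mem_right _ hf)

lemma mem_dualSpace_sup {I J : Ideal (PolyR N)} {q : PolyR N} (hI : q ∈ dualSpace I)
    (hJ : q ∈ dualSpace J) : q ∈ dualSpace (I ⊔ J) := by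
  intro f hf
  obtain ⟨a, ha, b, hb, rfl⟩ := Submodule.mem_sup.mp hf
  rw [dapply_add, hI a ha, hJ b hb, add_zero]

lemma mem_dualSpace_span_X {A : Set (Fin N)} {q : PolyR N}
    (hq : ∀ i ∈ A, q.divMonomial (Finsupp.single i 1) = 0) :
    q ∈ dualSpace (Ideal.span (X '' A)) := by
  -- Vanishing of `q` alone is not stable under `R`-multiples; vanishing on all `g * f` is.
  suffices h : ∀ f ∈ Ideal.span (X '' A), ∀ g : PolyR N, dapply q (g * f) = 0 from
    fun f hf => by simpa using h f hf 1
  intro f hf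
  induction hf using Submodule.span_induction with
  | mem f hf =>
    obtain ⟨i, hi, rfl⟩ := hf
    intro g
    rw [← dapply_divMonomial_single, hq i hi]
    simp [dapply]
  | zero => intro g; simp [dapply]
  | add f f' _ _ hf hf' => intro g; rw [mul_add, dapply_add, hf g, hf' g, add_zero]
  | smul r f _ hf => intro g; rw [smul_eq_mul, ← mul_assoc]; exact hf _

lemma divMonomial_mem_expSupported {P : (Fin N →₀ ℕ) → Prop} {q : PolyR N}
    (hq : q ∈ expSupported P) (s : Fin N →₀ ℕ) :
    q.divMonomial s ∈ expSupported (fun β => P (s + β)) := fun β hβ =>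
  hq _ (by rw [mem_support_iff, ← coeff_divMonomial]; exact mem_support_iff.mp hβ)

lemma sum_single_add_apply {A : Finset (Fin N)} {i : Fin N} (hi : i ∈ A) (β : Fin N →₀ ℕ) :
    ∑ j ∈ A, (Finsupp.single i 1 + β : Fin N →₀ ℕ) j = ∑ j ∈ A, β j + 1 := by
  classical
  simp [Finset.sum_add_distrib, Finsupp.single_apply, hi, add_comm]

/-- The contractions `q ↦ x_i · q` for `i ∈ A`, where `(x_i · q)(f) = q(x_i f)`. -/
def contractVars (A : Finset (Fin N)) : PolyR N →ₗ[ℂ] (A → PolyR N) :=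
  LinearMap.pi fun i => divMonomialₗ (Finsupp.single (i : Fin N) 1)

variable (I : Ideal (PolyR N)) (A : Finset (Fin N))

lemma map_contractVars_elimDual_succ_le (d : ℕ) :
    (elimDual I A (d + 1)).map (contractVars A) ≤
      Submodule.pi Set.univ fun _ => elimDual I A d := by
  rintro _ ⟨q, ⟨hqI, hqA⟩, rfl⟩ i -
  refine ⟨divMonomial_single_mem_dualSpace hqI i, fun β hβ => ?_⟩
  have h : ∑ j ∈ A, (Finsupp.single (i : Fin N) 1 + β : Fin N →₀ ℕ) j ≤ d + 1 :=
    divMonomial_mem_expSupported hqA _ β hβ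
  rw [sum_single_add_apply i.2] at h
  omega

lemma elimDual_zero_le_ker_contractVars : elimDual I A 0 ≤ LinearMap.ker (contractVars A) := by
  rintro q ⟨-, hqA⟩
  funext i
  ext β
  by_contra hβ
  have h : ∑ j ∈ A, (Finsupp.single (i : Fin N) 1 + β : Fin N →₀ ℕ) j ≤ 0 :=
    divMonomial_mem_expSupported hqA _ β (mem_support_iff.mpr hβ)
  rw [sum_single_add_apply i.2] at h
  omega

lemma elimDual_inf_ker_contractVars_le (d : ℕ) :
    elimDual I A d ⊓ LinearMap.ker (contractVars A) ≤
      dualSpace (I + Ideal.span (X '' (A : Set (Fin N)))) := by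
  rintro q ⟨⟨hqI, -⟩, hq⟩
  exact mem_dualSpace_sup hqI <| mem_dualSpace_span_X fun i hi =>
    congrFun (LinearMap.mem_ker.mp hq) ⟨i, hi⟩

end MacaulayDual

theorem statement15_general {N : ℕ} (I : Ideal (PolyR N))
    (A : Finset (Fin N))
    (hfin : FiniteDimensional ℂ
      (dualSpace (I + Ideal.span ((fun i => (MvPolynomial.X i : PolyR N)) ''
        (A : Set (Fin N))))))
    (d : ℕ) :
    FiniteDimensional ℂ (elimDual I A d) := by
  induction d with
  | zero =>
    exact Submodule.finiteDimensional_of_le fun q hq =>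
      elimDual_inf_ker_contractVars_le I A 0 ⟨hq, elimDual_zero_le_ker_contractVars I A hq⟩
  | succ d ih =>
    have := Submodule.finiteDimensional_of_le (map_contractVars_elimDual_succ_le I A d)
    have := Submodule.finiteDimensional_of_le (elimDual_inf_ker_contractVars_le I A (d + 1))
    exact Submodule.finiteDimensional_of_map_of_inf_ker (contractVars A)

/-- With `A = {x_1,…,x_m}` (`1 ≤ m ≤ N`), if
`dim_ℂ D_0[I + ⟨x_1,…,x_m⟩] < ∞`, then every eliminating truncated dual space
`E_0^d[I, A]` is finite dimensional over `ℂ`. -/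
theorem statement15 {N : ℕ} (hN : 1 ≤ N) (I : Ideal (PolyR N)) (m : ℕ)
    (hm1 : 1 ≤ m) (hmN : m ≤ N)
    (A : Finset (Fin N)) (hA : A = Finset.univ.filter (fun i : Fin N => (i : ℕ) < m))
    (hfin : FiniteDimensional ℂ
      (dualSpace (I + Ideal.span ((fun i => (MvPolynomial.X i : PolyR N)) ''
        (A : Set (Fin N))))))
    (d : ℕ) :
    FiniteDimensional ℂ (elimDual I A d) :=
  statement15_general I A hfin d
end
end

section
/- For every ideal I ⊆ R = ℂ[x_1,…,x_N] and every d ∈ ℕ, the eliminating truncated dual space of the quotient ideal satisfies E_0^d[I : ⟨x_1⟩, {x_1}] = x_1·E_0^{d+1}[I, {x_1}] := {x_1·q : q ∈ E_0^{d+1}[I, {x_1}]}, where I : ⟨x_1⟩ = {f ∈ R : x_1 f ∈ I}. -/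
open MvPolynomial

noncomputable section

/-!
As coefficient polynomials, `u = X₁ * p` satisfies `x₁ · u = p`, and `u` vanishes on `I ∩ ⟨x₁⟩`
whenever `p` vanishes on `I : ⟨x₁⟩`. It remains to add to `u` a functional `r` free of `∂₁`
(so `x₁ · r = 0`) with `u + r` vanishing on `I`; such an `r` only sees `f ∈ I` modulo `x₁`.
By Artin–Rees, an `f ∈ I` lying in `m^K + ⟨x₁⟩` lies in `m^(deg u + 1) I + ⟨x₁⟩`, on which `u`
vanishes. Hence `-u` restricted to `I` factors through the finitely many coefficients of `f` at
`x₁`-free monomials of degree `< K`, so it is given by such an `r`.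
-/

theorem Ideal.exists_inf_pow_sup_le_pow_mul_sup {R : Type*} [CommRing R] [IsNoetherianRing R]
    (𝔞 I J : Ideal R) (n : ℕ) : ∃ K, I ⊓ (𝔞 ^ K ⊔ J) ≤ 𝔞 ^ n * I ⊔ J := by
  obtain ⟨c, hc⟩ := 𝔞.exists_pow_inf_eq_pow_smul (I ⊔ J)
  have hAR : 𝔞 ^ (n + c) ⊓ (I ⊔ J) ≤ 𝔞 ^ n * I ⊔ J := by
    have h := hc (n + c) (Nat.le_add_left c n)
    simp only [smul_eq_mul, Ideal.mul_top, Nat.add_sub_cancel] at h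
    calc 𝔞 ^ (n + c) ⊓ (I ⊔ J) ≤ 𝔞 ^ n * (I ⊔ J) := h ▸ Ideal.mul_mono_right inf_le_right
      _ = 𝔞 ^ n * I ⊔ 𝔞 ^ n * J := Ideal.mul_sup _ _ _
      _ ≤ 𝔞 ^ n * I ⊔ J := sup_le_sup_left Ideal.mul_le_right _
  refine ⟨n + c, fun f ⟨hfI, hf⟩ => ?_⟩
  obtain ⟨a, ha, j, hj, rfl⟩ := Submodule.mem_sup.mp hf
  have haIJ : a ∈ I ⊔ J := by
    simpa using Submodule.sub_mem _ (Ideal.mem_sup_left hfI) (Ideal.mem_sup_right hj)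
  exact Submodule.add_mem _ (hAR ⟨ha, haIJ⟩) (Ideal.mem_sup_right hj)

namespace MacaulayDual

variable {N : ℕ}

lemma dapply_eq_sum_of_support_subset (q f : PolyR N) {s : Finset (Fin N →₀ ℕ)}
    (hs : f.support ⊆ s) : dapply q f = ∑ α ∈ s, q.coeff α * f.coeff α :=
  Finset.sum_subset hs fun α _ hα => by rw [notMem_support_iff.mp hα, mul_zero]

def dpair : PolyR N →ₗ[ℂ] PolyR N →ₗ[ℂ] ℂ :=
  LinearMap.mk₂ ℂ dapply
    (fun q q' f => by simp only [dapply, coeff_add, add_mul, Finset.sum_add_distrib])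
    (fun c q f => by simp only [dapply, coeff_smul, smul_eq_mul, mul_assoc, Finset.mul_sum])
    (fun q f f' => by
      rw [dapply_eq_sum_of_support_subset q (f + f') support_add,
        dapply_eq_sum_of_support_subset q f Finset.subset_union_left,
        dapply_eq_sum_of_support_subset q f' Finset.subset_union_right,
        ← Finset.sum_add_distrib]
      simp only [coeff_add, mul_add])
    (fun c q f => by
      rw [dapply_eq_sum_of_support_subset q (c • f) support_smul, dapply, smul_eq_mul,
        Finset.mul_sum]
      simp only [coeff_smul, smul_eq_mul, mul_left_comm])

@[simp] lemma dpair_apply (q f : PolyR N) : dpair q f = dapply q f := rfl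

lemma dapply_monomial_left (α : Fin N →₀ ℕ) (c : ℂ) (f : PolyR N) :
    dapply (monomial α c) f = c * f.coeff α := by
  rw [dapply_eq_sum_of_support_subset _ f (Finset.subset_union_left (s₂ := {α})),
    Finset.sum_eq_single_of_mem α (by simp)]
  · rw [coeff_monomial, if_pos rfl]
  · intro β _ hβ
    rw [coeff_monomial, if_neg (Ne.symm hβ), zero_mul]

lemma coeff_dmul_X (i : Fin N) (q : PolyR N) (β : Fin N →₀ ℕ) :
    (dmul (X i) q).coeff β = q.coeff (β + Finsupp.single i 1) := by
  have hterm : ∀ α, coeff β (if Finsupp.single i 1 ≤ α then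
      monomial (α - Finsupp.single i 1) ((X i : PolyR N).coeff (Finsupp.single i 1) * q.coeff α)
      else 0) = if α = β + Finsupp.single i 1 then q.coeff α else 0 := by
    intro α
    by_cases hα : Finsupp.single i 1 ≤ α
    · simp only [if_pos hα, coeff_X, one_mul, coeff_monomial, tsub_eq_iff_eq_add_of_le hα,
        ↓reduceIte]
    · rw [if_neg hα, coeff_zero, if_neg (by rintro rfl; exact hα le_add_self)]
  rw [dmul, support_X, Finset.sum_singleton, coeff_sum, Finset.sum_congr rfl fun α _ => hterm α,
    Finset.sum_ite_eq']
  split_ifs with hmem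
  · rfl
  · exact (notMem_support_iff.mp hmem).symm

lemma dapply_dmul_X (i : Fin N) (q f : PolyR N) :
    dapply (dmul (X i) q) f = dapply q (X i * f) := by
  rw [dapply, dapply, support_X_mul, Finset.sum_map]
  refine Finset.sum_congr rfl fun β _ => ?_
  rw [addLeftEmbedding_apply, coeff_dmul_X, coeff_X_mul, add_comm]

lemma dapply_X_mul_X_mul (i : Fin N) (p g : PolyR N) :
    dapply (X i * p) (X i * g) = dapply p g := by
  rw [dapply, dapply, support_X_mul, Finset.sum_map]
  refine Finset.sum_congr rfl fun β _ => ?_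
  rw [addLeftEmbedding_apply, coeff_X_mul, coeff_X_mul]

lemma mem_elimDual_singleton {I : Ideal (PolyR N)} {i : Fin N} {d : ℕ} {q : PolyR N} :
    q ∈ elimDual I {i} d ↔ q ∈ dualSpace I ∧ ∀ α ∈ q.support, α i ≤ d := by
  simp only [elimDual, Submodule.mem_inf, Finset.sum_singleton]
  rfl

lemma dapply_eq_zero_of_mem_pow_idealOfVars {u w : PolyR N}
    (hw : w ∈ idealOfVars (Fin N) ℂ ^ (u.totalDegree + 1)) : dapply u w = 0 := by
  refine Finset.sum_eq_zero fun α hα => ?_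
  rw [notMem_support_iff.mp fun hu => ?_, zero_mul]
  have hdeg := (mem_pow_idealOfVars_iff _ w).mp hw α hα
  exact Nat.lt_irrefl _ ((le_totalDegree hu).trans_lt hdeg)

lemma mem_pow_idealOfVars_sup_span_X {i : Fin N} {K : ℕ} {f : PolyR N}
    (h : ∀ α ∈ f.support, α i = 0 → K ≤ α.degree) :
    f ∈ idealOfVars (Fin N) ℂ ^ K ⊔ Ideal.span {X i} := by
  rw [f.as_sum]
  refine Submodule.sum_mem _ fun α hα => ?_
  by_cases hαi : α i = 0
  · refine Ideal.mem_sup_left ((mem_pow_idealOfVars_iff _ _).mpr fun β hβ => ?_)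
    rw [Finset.mem_singleton.mp (support_monomial_subset hβ)]
    exact h α hα hαi
  · refine Ideal.mem_sup_right ?_
    rw [← Set.image_singleton, mem_ideal_span_X_image]
    intro β hβ
    exact ⟨i, rfl, Finset.mem_singleton.mp (support_monomial_subset hβ) ▸ hαi⟩

lemma exists_finite_dapply_eq_zero (I : Ideal (PolyR N)) (i : Fin N) {u : PolyR N}
    (hu : u ∈ dualSpace (I ⊓ Ideal.span {X i})) :
    ∃ F : Set (Fin N →₀ ℕ), F.Finite ∧ (∀ α ∈ F, α i = 0) ∧
      ∀ f ∈ I, (∀ α ∈ F, f.coeff α = 0) → dapply u f = 0 := by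
  obtain ⟨K, hK⟩ := Ideal.exists_inf_pow_sup_le_pow_mul_sup (idealOfVars (Fin N) ℂ) I
    (Ideal.span {X i}) (u.totalDegree + 1)
  refine ⟨{α | α i = 0 ∧ α.degree < K}, (Finsupp.finite_of_degree_lt K).subset fun α h => h.2,
    fun α h => h.1, fun f hf hcoeff => ?_⟩
  have hfK : f ∈ idealOfVars (Fin N) ℂ ^ K ⊔ Ideal.span {X i} :=
    mem_pow_idealOfVars_sup_span_X fun α hα hαi =>
      not_lt.mp fun hlt => mem_support_iff.mp hα (hcoeff α ⟨hαi, hlt⟩)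
  obtain ⟨w, hw, y, hy, rfl⟩ := Submodule.mem_sup.mp (hK ⟨hf, hfK⟩)
  have hyI : y ∈ I := by simpa using I.sub_mem hf (Ideal.mul_le_right hw)
  rw [← dpair_apply, map_add, dpair_apply, dpair_apply,
    dapply_eq_zero_of_mem_pow_idealOfVars (Ideal.mul_le_left hw), hu y ⟨hyI, hy⟩, add_zero]

lemma exists_dapply_eq_of_coeff_eq_zero (V : Submodule ℂ (PolyR N)) {F : Set (Fin N →₀ ℕ)}
    (hF : F.Finite) (T : PolyR N →ₗ[ℂ] ℂ)
    (hT : ∀ f ∈ V, (∀ α ∈ F, f.coeff α = 0) → T f = 0) :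
    ∃ r : PolyR N, (∀ α ∈ r.support, α ∈ F) ∧ ∀ f ∈ V, dapply r f = T f := by
  have := hF.to_subtype
  have := Fintype.ofFinite F
  obtain ⟨c, hc⟩ := (Submodule.mem_span_range_iff_exists_fun ℂ).mp
    (mem_span_of_iInf_ker_le_ker (L := fun α : F => (lcoeff ℂ α.1).comp V.subtype)
      (K := T.comp V.subtype) fun f hf => hT f f.2 fun α hα => by
        simpa using (Submodule.mem_iInf _).mp hf ⟨α, hα⟩)
  refine ⟨∑ α : F, monomial α.1 (c α), fun β hβ => ?_, fun f hf => ?_⟩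
  · obtain ⟨α, -, hβα⟩ := Finset.mem_biUnion.mp (support_sum hβ)
    exact Finset.mem_singleton.mp (support_monomial_subset hβα) ▸ α.2
  · have := LinearMap.congr_fun hc ⟨f, hf⟩
    simp only [LinearMap.coe_sum, LinearMap.coe_smul, LinearMap.coe_comp, Submodule.coe_subtype,
      Finset.sum_apply, Pi.smul_apply, Function.comp_apply, lcoeff_apply, smul_eq_mul] at this
    rw [← this, ← dpair_apply, map_sum, LinearMap.sum_apply]
    simp only [dpair_apply, dapply_monomial_left]

lemma exists_add_mem_dualSpace (I : Ideal (PolyR N)) (i : Fin N) {u : PolyR N}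
    (hu : u ∈ dualSpace (I ⊓ Ideal.span {X i})) :
    ∃ r : PolyR N, (∀ α ∈ r.support, α i = 0) ∧ u + r ∈ dualSpace I := by
  obtain ⟨F, hF, hFi, hFu⟩ := exists_finite_dapply_eq_zero I i hu
  obtain ⟨r, hrF, hr⟩ := exists_dapply_eq_of_coeff_eq_zero (I.restrictScalars ℂ) hF (-dpair u)
    fun f hf hf0 => by simp [hFu f hf hf0]
  refine ⟨r, fun α hα => hFi α (hrF α hα), fun f hf => ?_⟩
  rw [← dpair_apply, map_add, LinearMap.add_apply, dpair_apply r, hr f hf]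
  simp

lemma X_mul_mem_dualSpace_inf_span_X {I : Ideal (PolyR N)} {i : Fin N} {p : PolyR N}
    (hp : p ∈ dualSpace (I.colon ((Ideal.span {X i} : Ideal (PolyR N)) : Set (PolyR N)))) :
    X i * p ∈ dualSpace (I ⊓ Ideal.span {X i}) := by
  rintro f ⟨hfI, hfX⟩
  obtain ⟨g, rfl⟩ := Ideal.mem_span_singleton.mp hfX
  rw [dapply_X_mul_X_mul]
  exact hp g (Submodule.mem_colon_span_singleton.mpr (by rwa [smul_eq_mul, mul_comm]))

lemma dmul_X_mem_dualSpace_colon {I : Ideal (PolyR N)} {i : Fin N} {q : PolyR N}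
    (hq : q ∈ dualSpace I) :
    dmul (X i) q ∈
      dualSpace (I.colon ((Ideal.span {X i} : Ideal (PolyR N)) : Set (PolyR N))) := by
  intro f hf
  rw [dapply_dmul_X]
  exact hq _ (by simpa [mul_comm] using Submodule.mem_colon_span_singleton.mp hf)

theorem elimDual_colon_span_X_eq_image_dmul (I : Ideal (PolyR N)) (i : Fin N) (d : ℕ) :
    (elimDual (I.colon ((Ideal.span {X i} : Ideal (PolyR N)) : Set (PolyR N))) {i} d :
        Set (PolyR N)) = dmul (X i) '' (elimDual I {i} (d + 1) : Set (PolyR N)) := by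
  ext p
  simp only [SetLike.mem_coe, Set.mem_image, mem_elimDual_singleton]
  constructor
  · rintro ⟨hp, hpd⟩
    obtain ⟨r, hri, hr⟩ := exists_add_mem_dualSpace I i (X_mul_mem_dualSpace_inf_span_X hp)
    refine ⟨X i * p + r, ⟨hr, fun α hα => ?_⟩, ?_⟩
    · rcases Finset.mem_union.mp (support_add hα) with hα | hα
      · rw [support_X_mul, Finset.mem_map] at hα
        obtain ⟨β, hβ, rfl⟩ := hα
        simpa [add_comm] using Nat.succ_le_succ (hpd β hβ)
      · simp [hri α hα]
    · ext β
      have hr0 : r.coeff (β + Finsupp.single i 1) = 0 :=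
        notMem_support_iff.mp fun h => by simpa using hri _ h
      rw [coeff_dmul_X, coeff_add, hr0, add_zero, mul_comm, coeff_mul_X]
  · rintro ⟨q, ⟨hq, hqd⟩, rfl⟩
    refine ⟨dmul_X_mem_dualSpace_colon hq, fun α hα => ?_⟩
    rw [mem_support_iff, coeff_dmul_X, ← mem_support_iff] at hα
    simpa using hqd _ hα

end MacaulayDual

/-- For every ideal `I ⊆ R` and every `d ∈ ℕ`,
`E_0^d[I : ⟨x_1⟩, {x_1}] = x_1 · E_0^{d+1}[I, {x_1}]`. -/
theorem statement16 {N : ℕ} (hN : 0 < N) (I : Ideal (PolyR N)) (d : ℕ) :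
    (elimDual (Submodule.colon I ((Ideal.span {MvPolynomial.X (⟨0, hN⟩ : Fin N)} : Ideal (PolyR N)) : Set (PolyR N)))
        {(⟨0, hN⟩ : Fin N)} d : Set (PolyR N))
      = (fun q : PolyR N => dmul (MvPolynomial.X (⟨0, hN⟩ : Fin N)) q) ''
          (elimDual I {(⟨0, hN⟩ : Fin N)} (d + 1) : Set (PolyR N)) :=
  MacaulayDual.elimDual_colon_span_X_eq_image_dmul I ⟨0, hN⟩ d
end
end

section
/- Let I ⊆ J be ideals of R = ℂ[x_1,…,x_N] that are contracted from the local ring of the origin (I = IR_0 ∩ R and J = JR_0 ∩ R), and suppose r ≥ 1 is such that the local Hilbert functions satisfy H_I(k) = H_J(k) for all k ≥ r. Then I = J if and only if D_0^{r−1}[I] = D_0^{r−1}[J]. -/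
open MvPolynomial

set_option synthInstance.maxHeartbeats 800000
set_option maxHeartbeats 1000000

noncomputable section

namespace Aux18

open Module

variable {N : ℕ}

lemma sum_eq_zero_iff (β : Fin N →₀ ℕ) : ∑ i, β i = 0 ↔ β = 0 := by
  constructor
  · intro h
    ext i
    exact Finset.sum_eq_zero_iff.mp h i (Finset.mem_univ i)
  · rintro rfl; simp

lemma sum_add (β γ : Fin N →₀ ℕ) : ∑ i, (β + γ) i = (∑ i, β i) + ∑ i, γ i := by
  simp [Finsupp.add_apply, Finset.sum_add_distrib]

lemma monomial_mem_pow (k : ℕ) (α : Fin N →₀ ℕ) (c : ℂ) (h : k ≤ ∑ i, α i) :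
    (MvPolynomial.monomial α c : PolyR N) ∈ mIdeal N ^ k := by
  induction k generalizing α with
  | zero => simp
  | succ k ih =>
    have h0 : ∑ i, α i ≠ 0 := by omega
    have hex : ∃ i, α i ≠ 0 := by
      by_contra hc; push_neg at hc
      exact h0 (Finset.sum_eq_zero fun i _ => hc i)
    obtain ⟨i, hi⟩ := hex
    have hle : Finsupp.single i 1 ≤ α :=
      Finsupp.single_le_iff.mpr (Nat.one_le_iff_ne_zero.mpr hi)
    have hα : (α - Finsupp.single i 1) + Finsupp.single i 1 = α := tsub_add_cancel_of_le hle
    have hsum1 : ∑ j, (Finsupp.single i 1 : Fin N →₀ ℕ) j = 1 := by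
      simp [Finsupp.single_apply]
    have hsum : ∑ j, α j = (∑ j, (α - Finsupp.single i 1 : Fin N →₀ ℕ) j) + 1 := by
      conv_lhs => rw [← hα]
      rw [sum_add, hsum1]
    have hmul : (MvPolynomial.monomial α c : PolyR N)
        = MvPolynomial.monomial (α - Finsupp.single i 1) c * MvPolynomial.X i := by
      rw [MvPolynomial.X, MvPolynomial.monomial_mul, mul_one, hα]
    rw [hmul, pow_succ]
    exact Ideal.mul_mem_mul (ih _ (by omega)) (Ideal.subset_span ⟨i, rfl⟩)

lemma mem_pow_of_support (k : ℕ) (g : PolyR N) (h : ∀ α ∈ g.support, k ≤ ∑ i, α i) :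
    g ∈ mIdeal N ^ k := by
  rw [← MvPolynomial.support_sum_monomial_coeff g]
  exact Ideal.sum_mem _ fun α hα => monomial_mem_pow k α _ (h α hα)

lemma mIdeal_le_ker : mIdeal N ≤ RingHom.ker (MvPolynomial.constantCoeff (R := ℂ) (σ := Fin N)) := by
  rw [mIdeal, Ideal.span_le]
  rintro _ ⟨i, rfl⟩
  simp [RingHom.mem_ker]

lemma coeff_eq_zero_of_mem_pow (k : ℕ) :
    ∀ g ∈ mIdeal N ^ k, ∀ α : Fin N →₀ ℕ, (∑ i, α i) < k → MvPolynomial.coeff α g = 0 := by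
  induction k with
  | zero => intro g _ α h; omega
  | succ k ih =>
    intro g hg
    rw [pow_succ'] at hg
    refine Submodule.mul_induction_on hg ?_ ?_
    · intro x hx y hy α hα
      rw [MvPolynomial.coeff_mul]
      refine Finset.sum_eq_zero fun p hp => ?_
      have hpsum : p.1 + p.2 = α := Finset.HasAntidiagonal.mem_antidiagonal.mp hp
      by_cases h1 : p.1 = 0
      · have : MvPolynomial.coeff p.1 x = 0 := by
          rw [h1]
          have := mIdeal_le_ker hx
          rwa [RingHom.mem_ker, MvPolynomial.constantCoeff_eq] at this
        rw [this, zero_mul]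
      · have h1' : 1 ≤ ∑ i, p.1 i := by
          rcases Nat.eq_zero_or_pos (∑ i, p.1 i) with h | h
          · exact absurd ((sum_eq_zero_iff _).mp h) h1
          · omega
        have : ∑ i, p.2 i < k := by
          have := sum_add p.1 p.2
          rw [hpsum] at this
          omega
        rw [ih y hy p.2 this, mul_zero]
    · intro x y hx hy α hα
      rw [MvPolynomial.coeff_add, hx α hα, hy α hα, add_zero]

/-- The finite set of exponents of total degree `< k`. -/
def lowSet (k : ℕ) : Finset (Fin N →₀ ℕ) :=
  Finset.filter (fun α => ∑ i, α i < k)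
    (Finset.Iic (Finsupp.equivFunOnFinite.symm fun _ => k))

lemma mem_lowSet {k : ℕ} {α : Fin N →₀ ℕ} : α ∈ lowSet k ↔ ∑ i, α i < k := by
  constructor
  · exact fun h => (Finset.mem_filter.mp h).2
  · intro h
    refine Finset.mem_filter.mpr ⟨Finset.mem_Iic.mpr ?_, h⟩
    intro i
    have : α i ≤ ∑ j, α j := Finset.single_le_sum (fun _ _ => Nat.zero_le _) (Finset.mem_univ i)
    have : α i ≤ k := by omega
    exact this

/-- The truncation of `g` below degree `k`. -/
def low (k : ℕ) (g : PolyR N) : PolyR N :=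
  ∑ α ∈ g.support.filter (fun α => ∑ i, α i < k), MvPolynomial.monomial α (g.coeff α)

lemma coeff_low (k : ℕ) (g : PolyR N) (α : Fin N →₀ ℕ) :
    (low k g).coeff α = if (∑ i, α i < k) then g.coeff α else 0 := by
  classical
  rw [low, MvPolynomial.coeff_sum]
  simp_rw [MvPolynomial.coeff_monomial]
  rw [Finset.sum_ite_eq' _ α (fun β => g.coeff β)]
  by_cases h : α ∈ g.support.filter (fun α => ∑ i, α i < k)
  · obtain ⟨hs, hlt⟩ := Finset.mem_filter.mp h
    simp [h, hlt]
  · rw [if_neg h]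
    by_cases hlt : ∑ i, α i < k
    · have : α ∉ g.support := fun hs => h (Finset.mem_filter.mpr ⟨hs, hlt⟩)
      rw [if_pos hlt, (MvPolynomial.notMem_support_iff).mp this]
    · rw [if_neg hlt]

lemma sub_low_mem (k : ℕ) (g : PolyR N) : g - low k g ∈ mIdeal N ^ k := by
  apply mem_pow_of_support
  intro α hα
  by_contra hlt
  push_neg at hlt
  apply MvPolynomial.mem_support_iff.mp hα
  rw [MvPolynomial.coeff_sub, coeff_low, if_pos hlt, sub_self]

lemma le_sup_pow_of_truncDual_le (I J : Ideal (PolyR N)) (r : ℕ) (hr : 1 ≤ r)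
    (h : truncDual I (r - 1) ≤ truncDual J (r - 1)) : J ≤ I + mIdeal N ^ r := by
  classical
  intro f hf
  set K : Submodule ℂ (PolyR N) := (I + mIdeal N ^ r).restrictScalars ℂ with hK
  have hKmem : ∀ g : PolyR N, g ∈ I + mIdeal N ^ r ↔ g ∈ K := fun g => Iff.rfl
  rw [hKmem]
  rw [← Submodule.Quotient.mk_eq_zero K]
  rw [← Module.forall_dual_apply_eq_zero_iff (R := ℂ)]
  intro φ
  set lam : PolyR N →ₗ[ℂ] ℂ := φ.comp K.mkQ with hlamdef
  have hlam : ∀ g ∈ I + mIdeal N ^ r, lam g = 0 := by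
    intro g hg
    have : K.mkQ g = 0 := (Submodule.Quotient.mk_eq_zero K).mpr hg
    simp [hlamdef, LinearMap.comp_apply, this]
  set q : PolyR N :=
    ∑ α ∈ lowSet r, MvPolynomial.monomial α (lam (MvPolynomial.monomial α 1)) with hqdef
  have hcoeff : ∀ α : Fin N →₀ ℕ,
      q.coeff α = if ∑ i, α i < r then lam (MvPolynomial.monomial α 1) else 0 := by
    intro α
    rw [hqdef, MvPolynomial.coeff_sum]
    simp_rw [MvPolynomial.coeff_monomial]
    rw [Finset.sum_ite_eq' _ α (fun β => lam (MvPolynomial.monomial β 1))]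
    by_cases hα : ∑ i, α i < r
    · rw [if_pos (mem_lowSet.mpr hα), if_pos hα]
    · rw [if_neg (fun hm => hα (mem_lowSet.mp hm)), if_neg hα]
  have hdapply : ∀ g : PolyR N, dapply q g = lam (low r g) := by
    intro g
    rw [low, map_sum, dapply]
    rw [Finset.sum_filter]
    refine Finset.sum_congr rfl fun α _ => ?_
    rw [hcoeff α]
    by_cases hα : ∑ i, α i < r
    · rw [if_pos hα, if_pos hα]
      have : MvPolynomial.monomial α (g.coeff α) = g.coeff α • MvPolynomial.monomial α 1 := by
        rw [MvPolynomial.smul_monomial, smul_eq_mul, mul_one]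
      rw [this, map_smul, smul_eq_mul, mul_comm]
    · rw [if_neg hα, if_neg hα, zero_mul]
  have hq_in : q ∈ truncDual I (r - 1) := by
    refine Submodule.mem_inf.mpr ⟨?_, ?_⟩
    · intro g hg
      rw [hdapply g]
      have h1 : lam g = 0 := hlam g (Ideal.mem_sup_left hg)
      have h2 : lam (g - low r g) = 0 := hlam _ (Ideal.mem_sup_right (sub_low_mem r g))
      rw [map_sub, h1, zero_sub, neg_eq_zero] at h2
      exact h2
    · intro α hα
      have hα' := MvPolynomial.mem_support_iff.mp hα
      rw [hcoeff α] at hα'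
      by_cases hlt : ∑ i, α i < r
      · omega
      · exact absurd (if_neg hlt) hα'
  have hq_J : q ∈ truncDual J (r - 1) := h hq_in
  have h0 : dapply q f = 0 := hq_J.1 f hf
  rw [hdapply f] at h0
  have h2 : lam (f - low r f) = 0 := hlam _ (Ideal.mem_sup_right (sub_low_mem r f))
  rw [map_sub, h0, sub_zero] at h2
  exact h2

/-- Quotients by `K + m^k` are finite-dimensional. -/
lemma finite_quot (K : Ideal (PolyR N)) (k : ℕ) :
    Module.Finite ℂ (PolyR N ⧸ ((K + mIdeal N ^ k).restrictScalars ℂ)) := by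
  classical
  set A : Submodule ℂ (PolyR N) := (K + mIdeal N ^ k).restrictScalars ℂ with hA
  refine ⟨⟨Finset.image (fun α => Submodule.Quotient.mk (MvPolynomial.monomial α 1)) (lowSet k), ?_⟩⟩
  rw [Finset.coe_image, eq_top_iff]
  rintro x -
  obtain ⟨g, rfl⟩ := Submodule.Quotient.mk_surjective A x
  have h1 : (Submodule.Quotient.mk g : PolyR N ⧸ A) = Submodule.Quotient.mk (low k g) := by
    rw [Submodule.Quotient.eq]
    exact Ideal.mem_sup_right (sub_low_mem k g)
  rw [h1, low]
  have : (Submodule.Quotient.mk (∑ α ∈ g.support.filter (fun α => ∑ i, α i < k),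
      MvPolynomial.monomial α (g.coeff α)) : PolyR N ⧸ A)
      = ∑ α ∈ g.support.filter (fun α => ∑ i, α i < k),
        (g.coeff α) • (Submodule.Quotient.mk (MvPolynomial.monomial α 1) : PolyR N ⧸ A) := by
    rw [← Submodule.mkQ_apply, map_sum]
    refine Finset.sum_congr rfl fun α _ => ?_
    have : MvPolynomial.monomial α (g.coeff α) = g.coeff α • MvPolynomial.monomial α 1 := by
      rw [MvPolynomial.smul_monomial, smul_eq_mul, mul_one]
    rw [this, Submodule.mkQ_apply, Submodule.Quotient.mk_smul]
  rw [this]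
  refine Submodule.sum_mem _ fun α hα => Submodule.smul_mem _ _ (Submodule.subset_span ?_)
  refine Set.mem_image_of_mem _ ?_
  exact Finset.mem_coe.mpr (mem_lowSet.mpr (Finset.mem_filter.mp hα).2)

/-- Surjection between quotients gives finrank inequality. -/
lemma finrank_quot_le {A B : Submodule ℂ (PolyR N)} (hAB : A ≤ B)
    [Module.Finite ℂ (PolyR N ⧸ A)] :
    finrank ℂ (PolyR N ⧸ B) ≤ finrank ℂ (PolyR N ⧸ A) := by
  set fmap := Submodule.mapQ A B LinearMap.id (fun x hx => hAB hx)
  have hsurj : Function.Surjective fmap := by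
    intro x
    obtain ⟨y, rfl⟩ := Submodule.Quotient.mk_surjective B x
    refine ⟨Submodule.Quotient.mk y, ?_⟩
    show fmap (A.mkQ y) = B.mkQ y
    simp only [fmap, Submodule.mkQ_apply, Submodule.mapQ_apply, LinearMap.id_apply]
  calc finrank ℂ (PolyR N ⧸ B) = finrank ℂ (LinearMap.range fmap) := by
        rw [LinearMap.range_eq_top.mpr hsurj, finrank_top]
    _ ≤ finrank ℂ (PolyR N ⧸ A) := fmap.finrank_range_le

lemma eq_of_le_of_finrank_eq {A B : Submodule ℂ (PolyR N)} (hAB : A ≤ B)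
    [Module.Finite ℂ (PolyR N ⧸ A)]
    (hrank : finrank ℂ (PolyR N ⧸ A) = finrank ℂ (PolyR N ⧸ B)) : A = B := by
  refine le_antisymm hAB ?_
  have e := Submodule.quotientQuotientEquivQuotient A B hAB
  have h1 := Submodule.finrank_quotient_add_finrank (B.map A.mkQ)
  have h2 : finrank ℂ ((PolyR N ⧸ A) ⧸ B.map A.mkQ) = finrank ℂ (PolyR N ⧸ B) := e.finrank_eq
  have h3 : finrank ℂ (B.map A.mkQ) = 0 := by omega
  have h4 : B.map A.mkQ = ⊥ := Submodule.finrank_eq_zero.mp h3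
  intro b hb
  have hmem : A.mkQ b ∈ B.map A.mkQ := Submodule.mem_map_of_mem hb
  rw [h4, Submodule.mem_bot, Submodule.mkQ_apply, Submodule.Quotient.mk_eq_zero] at hmem
  exact hmem

/-- The origin ideal is maximal. -/
lemma ker_isMaximal :
    (RingHom.ker (MvPolynomial.constantCoeff (R := ℂ) (σ := Fin N))).IsMaximal :=
  RingHom.ker_isMaximal_of_surjective _ (fun c => ⟨MvPolynomial.C c, MvPolynomial.constantCoeff_C _ c⟩)

lemma atOrigin_eq :
    haveI := (ker_isMaximal (N := N)).isPrime
    atOrigin N = (RingHom.ker (MvPolynomial.constantCoeff (R := ℂ) (σ := Fin N))).primeCompl := by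
  ext g
  simp [atOrigin, Ideal.primeCompl, RingHom.mem_ker]

lemma krull_step (I : Ideal (PolyR N)) (hI : contExt I = I) (f : PolyR N)
    (hf : ∀ k, f ∈ I + mIdeal N ^ k) : f ∈ I := by
  classical
  set P := RingHom.ker (MvPolynomial.constantCoeff (R := ℂ) (σ := Fin N)) with hP
  haveI hPmax : P.IsMaximal := ker_isMaximal
  haveI hPprime : P.IsPrime := hPmax.isPrime
  haveI hloc : IsLocalization.AtPrime (LocR N) P := by
    show IsLocalization P.primeCompl (LocR N)
    exact atOrigin_eq (N := N) ▸ Localization.isLocalization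
  haveI : IsLocalRing (LocR N) := IsLocalization.AtPrime.isLocalRing (LocR N) P
  haveI : IsNoetherianRing (LocR N) :=
    IsLocalization.isNoetherianRing (atOrigin N) (LocR N) inferInstance
  set φ := algebraMap (PolyR N) (LocR N) with hφ
  set I' := Ideal.map φ I with hI'
  set m' := Ideal.map φ (mIdeal N) with hm'
  have hm'top : m' ≠ ⊤ := by
    intro htop
    have hle : m' ≤ IsLocalRing.maximalIdeal (LocR N) := by
      rw [hm', Ideal.map_le_iff_le_comap]
      intro x hx
      rw [Ideal.mem_comap, IsLocalRing.mem_maximalIdeal, mem_nonunits_iff]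
      rw [IsLocalization.AtPrime.isUnit_to_map_iff (LocR N) P x]
      exact fun hc => hc (mIdeal_le_ker hx)
    rw [htop] at hle
    exact (IsLocalRing.maximalIdeal.isMaximal (LocR N)).ne_top (top_le_iff.mp hle)
  haveI : Module.Finite (LocR N) (LocR N ⧸ I') :=
    Module.Finite.of_surjective (Submodule.mkQ (I'.restrictScalars (LocR N)))
      (Submodule.Quotient.mk_surjective _)
  have hbot := Ideal.iInf_pow_smul_eq_bot_of_isLocalRing
    (R := LocR N) (M := LocR N ⧸ I') (I := m') hm'top
  have hx : ∀ k, ((Submodule.Quotient.mk (φ f)) : LocR N ⧸ I')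
      ∈ (m' ^ k • ⊤ : Submodule (LocR N) (LocR N ⧸ I')) := by
    intro k
    have h1 : φ f ∈ I' ⊔ m' ^ k := by
      have h2 := Ideal.mem_map_of_mem φ (hf k)
      rw [Submodule.add_eq_sup, Ideal.map_sup, Ideal.map_pow] at h2
      exact h2
    obtain ⟨a, ha, b, hb, hab⟩ := Submodule.mem_sup.mp h1
    have he : (Submodule.Quotient.mk (φ f) : LocR N ⧸ I') = Submodule.Quotient.mk b := by
      rw [Submodule.Quotient.eq, ← hab]
      simpa using ha
    have hb1 : (Submodule.Quotient.mk b : LocR N ⧸ I') = b • (Submodule.Quotient.mk 1) := by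
      rw [← Submodule.Quotient.mk_smul, smul_eq_mul, mul_one]
    rw [he, hb1]
    exact Submodule.smul_mem_smul hb Submodule.mem_top
  have hmem : ((Submodule.Quotient.mk (φ f)) : LocR N ⧸ I')
      ∈ (⊥ : Submodule (LocR N) (LocR N ⧸ I')) := by
    rw [← hbot]
    exact (Submodule.mem_iInf _).mpr fun k => hx k
  rw [Submodule.mem_bot, Submodule.Quotient.mk_eq_zero] at hmem
  rw [← hI]
  exact hmem

end Aux18

/-- Let `I ⊆ J` be ideals contracted from the local ring of the
origin, and let `r ≥ 1` be such that the local Hilbert functions of `I` and `J`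
agree for all `k ≥ r`.  Then `I = J` iff `D_0^{r-1}[I] = D_0^{r-1}[J]`. -/

theorem statement18 {N : ℕ} (hN : 1 ≤ N) (I J : Ideal (PolyR N))
    (hIJ : I ≤ J) (hI : contExt I = I) (hJ : contExt J = J)
    (r : ℕ) (hr : 1 ≤ r)
    (hH : ∀ k, r ≤ k → hilb I k = hilb J k) :
    I = J ↔ truncDual I (r - 1) = truncDual J (r - 1) := by
  constructor
  · rintro rfl; rfl
  · intro hEq
    have h1 : J ≤ I + mIdeal N ^ r := Aux18.le_sup_pow_of_truncDual_le I J r hr (le_of_eq hEq)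
    have hEqr : I + mIdeal N ^ r = J + mIdeal N ^ r := by
      rw [Submodule.add_eq_sup, Submodule.add_eq_sup]
      exact le_antisymm (sup_le_sup_right hIJ _)
        (sup_le (by rw [← Submodule.add_eq_sup]; exact h1) le_sup_right)
    have hdim_eq : ∀ (K : Ideal (PolyR N)) (k : ℕ),
        Module.finrank ℂ (PolyR N ⧸ (K + mIdeal N ^ k))
          = Module.finrank ℂ (PolyR N ⧸ ((K + mIdeal N ^ k).restrictScalars ℂ)) :=
      fun K k => (Submodule.Quotient.restrictScalarsEquiv ℂ (K + mIdeal N ^ k)).symm.finrank_eq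
    have hmono : ∀ (K : Ideal (PolyR N)) (k : ℕ),
        Module.finrank ℂ (PolyR N ⧸ (K + mIdeal N ^ k))
          ≤ Module.finrank ℂ (PolyR N ⧸ (K + mIdeal N ^ (k + 1))) := by
      intro K k
      rw [hdim_eq, hdim_eq]
      haveI := Aux18.finite_quot K (k + 1)
      apply Aux18.finrank_quot_le
      intro x hx
      have hx' : x ∈ K + mIdeal N ^ (k + 1) := hx
      show x ∈ K + mIdeal N ^ k
      rw [Submodule.add_eq_sup] at hx' ⊢
      exact sup_le_sup_left (Ideal.pow_le_pow_right (Nat.le_succ k)) K hx'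
    have hdim : ∀ k, r ≤ k → Module.finrank ℂ (PolyR N ⧸ (I + mIdeal N ^ k))
        = Module.finrank ℂ (PolyR N ⧸ (J + mIdeal N ^ k)) := by
      intro k hk
      induction k, hk using Nat.le_induction with
      | base => rw [hEqr]
      | succ k hk ih =>
        have hh := hH k hk
        have h1' := hmono I k
        have h2' := hmono J k
        simp only [hilb] at hh
        omega
    have hidl : ∀ k, r ≤ k → I + mIdeal N ^ k = J + mIdeal N ^ k := by
      intro k hk
      have hle : (I + mIdeal N ^ k).restrictScalars ℂ ≤ (J + mIdeal N ^ k).restrictScalars ℂ := by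
        intro x hx
        have hx' : x ∈ I + mIdeal N ^ k := hx
        show x ∈ J + mIdeal N ^ k
        rw [Submodule.add_eq_sup] at hx' ⊢
        exact sup_le_sup_right hIJ _ hx'
      haveI := Aux18.finite_quot I k
      have heq := Aux18.eq_of_le_of_finrank_eq hle
        (by rw [← hdim_eq, ← hdim_eq]; exact hdim k hk)
      exact Submodule.restrictScalars_injective ℂ _ _ heq
    refine le_antisymm hIJ ?_
    intro f hf
    apply Aux18.krull_step I hI f
    intro k
    have hk' : f ∈ I + mIdeal N ^ (max k r) := by
      rw [hidl _ (le_max_right k r)]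
      exact Ideal.mem_sup_left hf
    have hpow : mIdeal N ^ (max k r) ≤ mIdeal N ^ k := Ideal.pow_le_pow_right (le_max_left k r)
    rw [Submodule.add_eq_sup] at hk' ⊢
    exact sup_le_sup_left hpow I hk'
end
end
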